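/- (Convergence with convenient probabilities, one-step expected decrease.) Let A be a p×m real matrix and B an n×q real matrix. Let S_1,…,S_{r₁} with S_i a p×τ₁(i) real matrix be such that S_iᵀA has full row rank for every i, and let 𝐒 = [S_1,…,S_{r₁}] denote their column concatenation, with Aᵀ𝐒 having full row rank. Let P_1,…,P_{r₂} with P_j a q×τ₂(j) real matrix be such that P_jᵀBᵀ has full row rank for every j, and let 𝐏 = [P_1,…,P_{r₂}] denote their column concatenation, with B𝐏 having full row rank. Set p¹_i = Tr(S_iᵀAAᵀS_i)/‖Aᵀ𝐒‖_F² and p²_j = Tr(P_jᵀBᵀBP_j)/‖B𝐏‖_F². Let X*, X be m×n real matrices with C = AX*B, and define X⁺_{ij} = X − AᵀS_i(S_iᵀAAᵀS_i)⁻¹S_iᵀ(AXB − C)P_j(P_jᵀBᵀBP_j)⁻¹P_jᵀBᵀ. Then Σ_{i=1}^{r₁} Σ_{j=1}^{r₂} p¹_i p²_j ‖X⁺_{ij} − X*‖_F² ≤ ρ·‖X − X*‖_F², where ρ = 1 − λ_min(𝐒ᵀAAᵀ𝐒)·λ_min(𝐏ᵀBᵀB𝐏)/(‖Aᵀ𝐒‖_F²·‖B𝐏‖_F²).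 -/

import Mathlib

/-!
Put `R = X - X*`, `N i = (S i)ᵀ A`, `M j = (P j)ᵀ Bᵀ`, and let `Z i`, `W j` be the orthogonal
projections onto the row spaces of `N i`, `M j`. Then `X⁺ i j - X* = R - Z i R W j`, so
`‖X⁺ i j - X*‖² = ‖R‖² - ⟨R, Z i R W j⟩`, and the average over `p¹ ⊗ p²` is `‖R‖² - ⟨R, Z̄ R W̄⟩`
with `Z̄ = ∑ p¹ i • Z i`, `W̄ = ∑ p² j • W j`. In the Loewner order `‖N i‖² • Z i ⪰ (N i)ᵀ N i`, and
these Gram matrices sum to `(Aᵀ𝐒)(Aᵀ𝐒)ᵀ`, which dominates `λ_min(𝐒ᵀAAᵀ𝐒) • 1` because `Aᵀ𝐒` has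
full row rank. Hence `Z̄ ⪰ (λ₁ / ‖Aᵀ𝐒‖²) • 1`, likewise `W̄ ⪰ (λ₂ / ‖B𝐏‖²) • 1`, and therefore
`⟨R, Z̄ R W̄⟩ ≥ λ₁ λ₂ / (‖Aᵀ𝐒‖² ‖B𝐏‖²) • ‖R‖²`.
-/

open Matrix
open scoped MatrixOrder

namespace Matrix

lemma isUnit_of_rank_eq_card {n K : Type*} [Fintype n] [DecidableEq n] [Field K]
    {M : Matrix n n K} (h : M.rank = Fintype.card n) : IsUnit M := by
  rw [← mulVec_surjective_iff_isUnit]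
  have : LinearMap.range M.mulVecLin = ⊤ := Submodule.eq_top_of_finrank_eq <| by
    rw [← rank, h, Module.finrank_fintype_fun_eq_card]
  exact LinearMap.range_eq_top.mp this

section Stack

variable {k ι : Type*} {κ : ι → Type*}

def stackRows (N : ∀ i, Matrix (κ i) k ℝ) : Matrix (Σ i, κ i) k ℝ := of fun x j => N x.1 x.2 j

lemma transpose_stackRows_mul_self [Fintype ι] [∀ i, Fintype (κ i)] (N : ∀ i, Matrix (κ i) k ℝ) :
    (stackRows N)ᵀ * stackRows N = ∑ i, (N i)ᵀ * N i := by
  ext a b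
  simp only [mul_apply, transpose_apply, Matrix.sum_apply, stackRows, of_apply]
  rw [← Finset.univ_sigma_univ, Finset.sum_sigma]

lemma transpose_of_sigma_mul_eq_stackRows {p : Type*} [Fintype p]
    (S : ∀ i, Matrix p (κ i) ℝ) (A : Matrix p k ℝ) :
    (of fun a (x : Σ i, κ i) => S x.1 a x.2)ᵀ * A = stackRows fun i => (S i)ᵀ * A := by
  ext ⟨i, t⟩ j
  simp [stackRows, mul_apply]

lemma trace_stackRows_mul_transpose [Fintype k] [Fintype ι] [∀ i, Fintype (κ i)]
    (N : ∀ i, Matrix (κ i) k ℝ) :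
    (stackRows N * (stackRows N)ᵀ).trace = ∑ i, (N i * (N i)ᵀ).trace := by
  simp only [trace_mul_comm _ (_ᵀ), transpose_stackRows_mul_self, trace_sum]

lemma sum_trace_div_trace_stackRows [Fintype k] [Nonempty k] [Fintype ι] [∀ i, Fintype (κ i)]
    {N : ∀ i, Matrix (κ i) k ℝ} (hN : (stackRows N).rank = Fintype.card k) :
    ∑ i, (N i * (N i)ᵀ).trace / (stackRows N * (stackRows N)ᵀ).trace = 1 := by
  have hN0 : stackRows N ≠ 0 := fun h => by
    rw [h, rank_zero] at hN
    exact Fintype.card_ne_zero hN.symm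
  rw [← Finset.sum_div, ← trace_stackRows_mul_transpose, div_self]
  simpa [conjTranspose_eq_transpose_of_trivial] using
    (trace_mul_conjTranspose_self_eq_zero_iff (A := stackRows N)).not.2 hN0

end Stack

variable {k l : Type*} [Fintype k] [Fintype l]

lemma posSemidef_mul_transpose_self (N : Matrix k l ℝ) : (N * Nᵀ).PosSemidef := by
  simpa using posSemidef_self_mul_conjTranspose N

lemma posSemidef_transpose_mul_self (N : Matrix k l ℝ) : (Nᵀ * N).PosSemidef := by
  simpa using posSemidef_conjTranspose_mul_self N

lemma transpose_mul_mul_le_of_le {M N : Matrix k k ℝ} (h : M ≤ N) (R : Matrix k l ℝ) :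
    Rᵀ * M * R ≤ Rᵀ * N * R := by
  rw [le_iff, ← Matrix.sub_mul, ← Matrix.mul_sub]
  simpa using (le_iff.1 h).conjTranspose_mul_mul_same R

section Loewner

variable [DecidableEq k]

lemma IsHermitian.smul_one_le_iff {H : Matrix k k ℝ} (hH : H.IsHermitian) {c : ℝ} :
    c • 1 ≤ H ↔ ∀ i, c ≤ hH.eigenvalues i := by
  rw [← Algebra.algebraMap_eq_smul_one, algebraMap_le_iff_le_spectrum hH.isSelfAdjoint,
    hH.spectrum_real_eq_range_eigenvalues, Set.forall_mem_range]

lemma IsHermitian.le_smul_one_iff {H : Matrix k k ℝ} (hH : H.IsHermitian) {c : ℝ} :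
    H ≤ c • 1 ↔ ∀ i, hH.eigenvalues i ≤ c := by
  rw [← Algebra.algebraMap_eq_smul_one, le_algebraMap_iff_spectrum_le hH.isSelfAdjoint,
    hH.spectrum_real_eq_range_eigenvalues, Set.forall_mem_range]

lemma IsHermitian.iInf_eigenvalues_smul_one_le {H : Matrix k k ℝ} (hH : H.IsHermitian) :
    (⨅ i, hH.eigenvalues i) • 1 ≤ H :=
  hH.smul_one_le_iff.2 fun i => ciInf_le (Set.finite_range _).bddBelow i

lemma PosSemidef.le_trace_smul_one {M : Matrix k k ℝ} (hM : M.PosSemidef) :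
    M ≤ M.trace • 1 := by
  refine hM.isHermitian.le_smul_one_iff.2 fun i => ?_
  rw [hM.isHermitian.trace_eq_sum_eigenvalues]
  simpa using Finset.single_le_sum (fun j _ => hM.eigenvalues_nonneg j) (Finset.mem_univ i)

lemma trace_mul_nonneg {M N : Matrix k k ℝ} (hM : 0 ≤ M) (hN : 0 ≤ N) :
    0 ≤ (M * N).trace := by
  obtain ⟨C, rfl⟩ := CStarAlgebra.nonneg_iff_eq_star_mul_self.mp hM
  rw [Matrix.mul_assoc, trace_mul_comm, Matrix.mul_assoc, star_eq_conjTranspose,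
    ← Matrix.mul_assoc]
  exact (hN.posSemidef.mul_mul_conjTranspose_same C).trace_nonneg

lemma trace_mul_le_trace_mul_of_le {M N W : Matrix k k ℝ} (h : M ≤ N) (hW : 0 ≤ W) :
    (W * M).trace ≤ (W * N).trace := by
  have := trace_mul_nonneg hW (sub_nonneg.2 h)
  rw [Matrix.mul_sub, trace_sub] at this
  linarith

lemma smul_one_le_transpose_mul_self [DecidableEq l] {N : Matrix l k ℝ} {c : ℝ}
    (hc : c • 1 ≤ N * Nᵀ) (hN : N.rank = Fintype.card k) : c • 1 ≤ Nᵀ * N := by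
  set M := Nᵀ * N
  have hM : IsSelfAdjoint M := (posSemidef_transpose_mul_self N).isHermitian
  have hMunit : IsUnit M := isUnit_of_rank_eq_card (by rw [rank_transpose_mul_self, hN])
  -- `M² - c M = Nᵀ (N Nᵀ - c) N ⪰ 0`, so every `x ∈ spectrum M` has `x (x - c) ≥ 0`,
  -- while `x > 0` because `M` is positive semidefinite and invertible.
  have hquad : 0 ≤ cfc (fun x : ℝ => x ^ 2 - c * x) M := by
    rw [cfc_sub _ _ M, cfc_pow _ _ M, cfc_const_mul _ _ M, cfc_id' ℝ M]
    have hconj : M ^ 2 - c • M = Nᵀ * (N * Nᵀ - c • 1) * N := by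
      simp only [M, sq, Matrix.mul_sub, Matrix.sub_mul, Matrix.mul_smul, Matrix.smul_mul,
        Matrix.mul_one, Matrix.mul_assoc]
    rw [hconj]
    simpa using ((le_iff.1 hc).conjTranspose_mul_mul_same N).nonneg
  rw [← Algebra.algebraMap_eq_smul_one, algebraMap_le_iff_le_spectrum hM]
  intro x hx
  have hx0 : 0 < x :=
    lt_of_le_of_ne (spectrum_nonneg_of_nonneg (posSemidef_transpose_mul_self N).nonneg hx)
      fun h => (spectrum.zero_notMem_iff ℝ).2 hMunit (h ▸ hx)
  have := (cfc_nonneg_iff _ M).1 hquad x hx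
  nlinarith

end Loewner

section RowProj

variable [DecidableEq l]

/-- The orthogonal projection onto the row space of `N` when `N` has full row rank
(for other `N` the inverse is the junk value `0`). -/
noncomputable def rowProj (N : Matrix l k ℝ) : Matrix k k ℝ := Nᵀ * (N * Nᵀ)⁻¹ * N

lemma mul_rowProj {N : Matrix l k ℝ} (hN : N.rank = Fintype.card l) : N * rowProj N = N := by
  have hG : IsUnit (N * Nᵀ).det :=
    (isUnit_iff_isUnit_det _).1 (isUnit_of_rank_eq_card (by rw [rank_self_mul_transpose, hN]))
  rw [rowProj, ← Matrix.mul_assoc, ← Matrix.mul_assoc, mul_nonsing_inv _ hG, Matrix.one_mul]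

lemma transpose_rowProj (N : Matrix l k ℝ) : (rowProj N)ᵀ = rowProj N := by
  rw [rowProj, transpose_mul, transpose_mul, transpose_transpose, transpose_nonsing_inv,
    transpose_mul, transpose_transpose, Matrix.mul_assoc]

lemma isStarProjection_rowProj {N : Matrix l k ℝ} (hN : N.rank = Fintype.card l) :
    IsStarProjection (rowProj N) where
  isIdempotentElem := by
    rw [IsIdempotentElem]
    nth_rw 1 [rowProj]
    rw [Matrix.mul_assoc, mul_rowProj hN, rowProj]
  isSelfAdjoint := by
    rw [IsSelfAdjoint, star_eq_conjTranspose, conjTranspose_eq_transpose_of_trivial,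
      transpose_rowProj]

lemma transpose_mul_self_le_trace_smul_rowProj [DecidableEq k] {N : Matrix l k ℝ}
    (hN : N.rank = Fintype.card l) : Nᵀ * N ≤ (N * Nᵀ).trace • rowProj N := by
  have hZ := isStarProjection_rowProj hN
  calc Nᵀ * N = rowProj N * (Nᵀ * N) * rowProj N := by
        rw [Matrix.mul_assoc, Matrix.mul_assoc, mul_rowProj hN, ← Matrix.mul_assoc,
          ← transpose_rowProj N, ← transpose_mul, mul_rowProj hN]
    _ ≤ rowProj N * ((Nᵀ * N).trace • 1) * rowProj N :=
      hZ.isSelfAdjoint.conjugate_le_conjugate (posSemidef_transpose_mul_self N).le_trace_smul_one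
    _ = (N * Nᵀ).trace • rowProj N := by
      rw [trace_mul_comm, Matrix.mul_smul, Matrix.mul_one, Matrix.smul_mul,
        hZ.isIdempotentElem.eq]

lemma div_smul_one_le_sum_div_smul_rowProj [DecidableEq k] {ι : Type*} [Fintype ι]
    [DecidableEq ι] {κ : ι → Type*} [∀ i, Fintype (κ i)] [∀ i, DecidableEq (κ i)]
    {N : ∀ i, Matrix (κ i) k ℝ} (hN : ∀ i, (N i).rank = Fintype.card (κ i))
    (hNc : (stackRows N).rank = Fintype.card k)
    {c : ℝ} (hc : c • 1 ≤ stackRows N * (stackRows N)ᵀ) :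
    (c / (stackRows N * (stackRows N)ᵀ).trace) • 1 ≤
      ∑ i, ((N i * (N i)ᵀ).trace / (stackRows N * (stackRows N)ᵀ).trace) • rowProj (N i) := by
  have hsum : c • 1 ≤ ∑ i, (N i * (N i)ᵀ).trace • rowProj (N i) :=
    calc c • 1 ≤ (stackRows N)ᵀ * stackRows N := smul_one_le_transpose_mul_self hc hNc
      _ = ∑ i, (N i)ᵀ * N i := transpose_stackRows_mul_self N
      _ ≤ _ := Finset.sum_le_sum fun i _ => transpose_mul_self_le_trace_smul_rowProj (hN i)
  have hT : 0 ≤ (stackRows N * (stackRows N)ᵀ).trace⁻¹ :=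
    inv_nonneg.2 (posSemidef_mul_transpose_self _).trace_nonneg
  rw [le_iff] at hsum ⊢
  convert hsum.smul hT using 1
  simp only [div_eq_inv_mul, mul_smul, Finset.smul_sum, smul_sub]

end RowProj

lemma trace_transpose_mul_self_sub_mul_mul (R : Matrix k l ℝ) {Z : Matrix k k ℝ}
    {W : Matrix l l ℝ} (hZ : IsStarProjection Z) (hW : IsStarProjection W) :
    ((R - Z * R * W)ᵀ * (R - Z * R * W)).trace = (Rᵀ * R).trace - (Rᵀ * Z * R * W).trace := by
  have hcross : ((Z * R * W)ᵀ * R).trace = (Rᵀ * Z * R * W).trace := by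
    rw [← trace_transpose, transpose_mul, transpose_transpose]
    simp only [Matrix.mul_assoc]
  have hsq : ((Z * R * W)ᵀ * (Z * R * W)).trace = (Rᵀ * Z * R * W).trace := by
    calc ((Z * R * W)ᵀ * (Z * R * W)).trace = (W * (Rᵀ * (Z * Z) * R * W)).trace := by
          rw [transpose_mul, transpose_mul, (isHermitian_iff_isSymm.1 hZ.isSelfAdjoint).eq,
            (isHermitian_iff_isSymm.1 hW.isSelfAdjoint).eq]
          simp only [Matrix.mul_assoc]
      _ = (Rᵀ * Z * R * (W * W)).trace := by
          rw [trace_mul_comm, hZ.isIdempotentElem.eq]; simp only [Matrix.mul_assoc]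
      _ = (Rᵀ * Z * R * W).trace := by rw [hW.isIdempotentElem.eq]
  rw [transpose_sub, Matrix.sub_mul, Matrix.mul_sub, Matrix.mul_sub, trace_sub, trace_sub,
    trace_sub, hcross, hsq]
  simp only [Matrix.mul_assoc]
  ring

lemma mul_mul_trace_transpose_mul_self_le [DecidableEq k] [DecidableEq l] (R : Matrix k l ℝ)
    {Z : Matrix k k ℝ} {W : Matrix l l ℝ} {c₁ c₂ : ℝ} (hc₁ : 0 ≤ c₁) (hc₂ : 0 ≤ c₂)
    (hZ : c₁ • 1 ≤ Z) (hW : c₂ • 1 ≤ W) :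
    c₁ * c₂ * (Rᵀ * R).trace ≤ (Rᵀ * Z * R * W).trace := by
  have h₁ : c₁ * (Rᵀ * R * W).trace ≤ (Rᵀ * Z * R * W).trace := by
    have := trace_mul_le_trace_mul_of_le (transpose_mul_mul_le_of_le hZ R)
      ((smul_nonneg hc₂ zero_le_one).trans hW)
    rwa [trace_mul_comm W, trace_mul_comm W, Matrix.mul_smul, Matrix.mul_one, Matrix.smul_mul,
      Matrix.smul_mul, trace_smul, smul_eq_mul] at this
  have h₂ : c₂ * (Rᵀ * R).trace ≤ (Rᵀ * R * W).trace := by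
    have := trace_mul_le_trace_mul_of_le hW (posSemidef_transpose_mul_self R).nonneg
    rwa [Matrix.mul_smul, Matrix.mul_one, trace_smul, smul_eq_mul] at this
  calc c₁ * c₂ * (Rᵀ * R).trace = c₁ * (c₂ * (Rᵀ * R).trace) := by ring
    _ ≤ c₁ * (Rᵀ * R * W).trace := mul_le_mul_of_nonneg_left h₂ hc₁
    _ ≤ _ := h₁

lemma sum_sum_mul_trace_transpose_mul_self_sub_le [DecidableEq k] [DecidableEq l]
    {ι κ : Type*} [Fintype ι] [Fintype κ] (R : Matrix k l ℝ) {Z : ι → Matrix k k ℝ}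
    {W : κ → Matrix l l ℝ} (hZ : ∀ i, IsStarProjection (Z i)) (hW : ∀ j, IsStarProjection (W j))
    {p : ι → ℝ} {q : κ → ℝ} (hp : ∑ i, p i = 1) (hq : ∑ j, q j = 1) {c₁ c₂ : ℝ}
    (hc₁ : 0 ≤ c₁) (hc₂ : 0 ≤ c₂)
    (hZc : c₁ • 1 ≤ ∑ i, p i • Z i) (hWc : c₂ • 1 ≤ ∑ j, q j • W j) :
    ∑ i, ∑ j, p i * q j * ((R - Z i * R * W j)ᵀ * (R - Z i * R * W j)).trace ≤
      (1 - c₁ * c₂) * (Rᵀ * R).trace := by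
  have havg : ∑ i, ∑ j, p i * q j * (Rᵀ * Z i * R * W j).trace =
      (Rᵀ * (∑ i, p i • Z i) * R * ∑ j, q j • W j).trace := by
    simp only [Matrix.mul_sum, Matrix.sum_mul, trace_sum, Matrix.mul_smul, Matrix.smul_mul,
      trace_smul, smul_eq_mul, Finset.mul_sum]
    rw [Finset.sum_comm]
    exact Finset.sum_congr rfl fun j _ => Finset.sum_congr rfl fun i _ => by ring
  have hone : ∑ i, ∑ j, p i * q j * (Rᵀ * R).trace = (Rᵀ * R).trace := by
    simp only [← Finset.sum_mul, ← Finset.mul_sum, hp, hq, one_mul]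
  have := mul_mul_trace_transpose_mul_self_le R hc₁ hc₂ hZc hWc
  simp only [trace_transpose_mul_self_sub_mul_mul R (hZ _) (hW _), mul_sub,
    Finset.sum_sub_distrib, hone, havg]
  linarith

lemma sum_sum_mul_trace_le_of_stackRows [DecidableEq k] [DecidableEq l] [Nonempty k]
    [Nonempty l] {ι₁ ι₂ : Type*} [Fintype ι₁] [Fintype ι₂] [DecidableEq ι₁] [DecidableEq ι₂]
    {κ₁ : ι₁ → Type*} {κ₂ : ι₂ → Type*} [∀ i, Fintype (κ₁ i)] [∀ j, Fintype (κ₂ j)]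
    [∀ i, DecidableEq (κ₁ i)] [∀ j, DecidableEq (κ₂ j)]
    {N₁ : ∀ i, Matrix (κ₁ i) k ℝ} {N₂ : ∀ j, Matrix (κ₂ j) l ℝ}
    (hN₁ : ∀ i, (N₁ i).rank = Fintype.card (κ₁ i)) (hN₂ : ∀ j, (N₂ j).rank = Fintype.card (κ₂ j))
    (hN₁c : (stackRows N₁).rank = Fintype.card k) (hN₂c : (stackRows N₂).rank = Fintype.card l)
    {c₁ c₂ : ℝ} (hc₁ : c₁ • 1 ≤ stackRows N₁ * (stackRows N₁)ᵀ)
    (hc₂ : c₂ • 1 ≤ stackRows N₂ * (stackRows N₂)ᵀ) (hc₁0 : 0 ≤ c₁) (hc₂0 : 0 ≤ c₂)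
    (R : Matrix k l ℝ) :
    ∑ i, ∑ j, ((N₁ i * (N₁ i)ᵀ).trace / (stackRows N₁ * (stackRows N₁)ᵀ).trace) *
        ((N₂ j * (N₂ j)ᵀ).trace / (stackRows N₂ * (stackRows N₂)ᵀ).trace) *
        ((R - rowProj (N₁ i) * R * rowProj (N₂ j))ᵀ *
          (R - rowProj (N₁ i) * R * rowProj (N₂ j))).trace
      ≤ (1 - c₁ * c₂ / ((stackRows N₁ * (stackRows N₁)ᵀ).trace *
          (stackRows N₂ * (stackRows N₂)ᵀ).trace)) * (Rᵀ * R).trace := by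
  rw [← div_mul_div_comm]
  exact sum_sum_mul_trace_transpose_mul_self_sub_le R
    (fun i => isStarProjection_rowProj (hN₁ i)) (fun j => isStarProjection_rowProj (hN₂ j))
    (sum_trace_div_trace_stackRows hN₁c) (sum_trace_div_trace_stackRows hN₂c)
    (div_nonneg hc₁0 (posSemidef_mul_transpose_self _).trace_nonneg)
    (div_nonneg hc₂0 (posSemidef_mul_transpose_self _).trace_nonneg)
    (div_smul_one_le_sum_div_smul_rowProj hN₁ hN₁c hc₁)
    (div_smul_one_le_sum_div_smul_rowProj hN₂ hN₂c hc₂)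

end Matrix

/-- convergence with convenient probabilities for a complete
discrete sampling pair, one-step expected decrease. -/
theorem stmt_18 {m n p q r₁ r₂ : ℕ} (τ₁ : Fin r₁ → ℕ) (τ₂ : Fin r₂ → ℕ)
    (A : Matrix (Fin p) (Fin m) ℝ) (B : Matrix (Fin n) (Fin q) ℝ)
    (S : ∀ i : Fin r₁, Matrix (Fin p) (Fin (τ₁ i)) ℝ)
    (P : ∀ j : Fin r₂, Matrix (Fin q) (Fin (τ₂ j)) ℝ)
    (hSi : ∀ i, ((S i)ᵀ * A).rank = τ₁ i)
    (hPj : ∀ j, ((P j)ᵀ * Bᵀ).rank = τ₂ j)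
    (Sc : Matrix (Fin p) ((i : Fin r₁) × Fin (τ₁ i)) ℝ)
    (hSc : Sc = Matrix.of fun a kt => S kt.1 a kt.2)
    (Pc : Matrix (Fin q) ((j : Fin r₂) × Fin (τ₂ j)) ℝ)
    (hPc : Pc = Matrix.of fun a kt => P kt.1 a kt.2)
    (hS : (Aᵀ * Sc).rank = m) (hP : (B * Pc).rank = n)
    (Xs X : Matrix (Fin m) (Fin n) ℝ) :
    let C : Matrix (Fin p) (Fin q) ℝ := A * Xs * B
    let Xp : Fin r₁ → Fin r₂ → Matrix (Fin m) (Fin n) ℝ := fun i j =>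
      X - Aᵀ * S i * ((S i)ᵀ * A * Aᵀ * S i)⁻¹ * (S i)ᵀ *
        (A * X * B - C) * P j * ((P j)ᵀ * Bᵀ * B * P j)⁻¹ * (P j)ᵀ * Bᵀ
    ∀ (hSA : (Scᵀ * A * Aᵀ * Sc).IsHermitian) (hPB : (Pcᵀ * Bᵀ * B * Pc).IsHermitian),
      ∑ i, ∑ j,
        (Matrix.trace ((S i)ᵀ * A * Aᵀ * S i) / Matrix.trace (Scᵀ * A * Aᵀ * Sc)) *
          (Matrix.trace ((P j)ᵀ * Bᵀ * B * P j) / Matrix.trace (Pcᵀ * Bᵀ * B * Pc)) *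
          Matrix.trace ((Xp i j - Xs)ᵀ * (Xp i j - Xs))
      ≤ (1 - (⨅ a, hSA.eigenvalues a) * (⨅ b, hPB.eigenvalues b) /
            (Matrix.trace (Scᵀ * A * Aᵀ * Sc) * Matrix.trace (Pcᵀ * Bᵀ * B * Pc))) *
          Matrix.trace ((X - Xs)ᵀ * (X - Xs)) := by
  intro C Xp hSA hPB
  rcases Nat.eq_zero_or_pos m with rfl | hm
  · simp [trace, mul_apply]
  rcases Nat.eq_zero_or_pos n with rfl | hn
  · simp [trace]
  have : Nonempty (Fin m) := ⟨⟨0, hm⟩⟩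
  have : Nonempty (Fin n) := ⟨⟨0, hn⟩⟩
  set NS : ∀ i, Matrix (Fin (τ₁ i)) (Fin m) ℝ := fun i => (S i)ᵀ * A
  set NP : ∀ j, Matrix (Fin (τ₂ j)) (Fin n) ℝ := fun j => (P j)ᵀ * Bᵀ
  have hNS : Scᵀ * A = stackRows NS := hSc ▸ transpose_of_sigma_mul_eq_stackRows S A
  have hNP : Pcᵀ * Bᵀ = stackRows NP := hPc ▸ transpose_of_sigma_mul_eq_stackRows P Bᵀ
  have eSc : Scᵀ * A * Aᵀ * Sc = stackRows NS * (stackRows NS)ᵀ := by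
    rw [← hNS]; simp only [transpose_mul, transpose_transpose, Matrix.mul_assoc]
  have ePc : Pcᵀ * Bᵀ * B * Pc = stackRows NP * (stackRows NP)ᵀ := by
    rw [← hNP]; simp only [transpose_mul, transpose_transpose, Matrix.mul_assoc]
  have hXp : ∀ i j, Xp i j - Xs = (X - Xs) - rowProj (NS i) * (X - Xs) * rowProj (NP j) := by
    intro i j
    simp only [Xp, C, rowProj, NS, NP, sub_right_comm X _ Xs, ← Matrix.mul_sub, ← Matrix.sub_mul,
      transpose_mul, transpose_transpose, Matrix.mul_assoc]
  have hSpsd : (Scᵀ * A * Aᵀ * Sc).PosSemidef := eSc ▸ posSemidef_mul_transpose_self _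
  have hPpsd : (Pcᵀ * Bᵀ * B * Pc).PosSemidef := ePc ▸ posSemidef_mul_transpose_self _
  have key := sum_sum_mul_trace_le_of_stackRows (N₁ := NS) (N₂ := NP)
    (fun i => by rw [hSi, Fintype.card_fin]) (fun j => by rw [hPj, Fintype.card_fin])
    (by rw [← hNS, ← rank_transpose, transpose_mul, transpose_transpose, hS, Fintype.card_fin])
    (by rw [← hNP, ← rank_transpose, transpose_mul, transpose_transpose, transpose_transpose, hP,
      Fintype.card_fin])
    (hSA.iInf_eigenvalues_smul_one_le.trans_eq eSc) (hPB.iInf_eigenvalues_smul_one_le.trans_eq ePc)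
    (Real.iInf_nonneg hSpsd.eigenvalues_nonneg) (Real.iInf_nonneg hPpsd.eigenvalues_nonneg)
    (X - Xs)
  rw [← eSc, ← ePc] at key
  simp only [hXp]
  simpa only [NS, NP, transpose_mul, transpose_transpose, Matrix.mul_assoc] using key
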